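/- Let a < b be real numbers, let m ≥ 1 and n = 2m−1 be odd, and let g_0,…,g_{n+1} be continuous functions on [a,b] such that both (g_0,…,g_n) and (g_0,…,g_{n+1}) are T_+-systems on [a,b]. Let c ∈ ℝ^{n+1} with M_c ≠ ∅, and let μ_max (respectively μ_min) be a measure in M_c maximizing (respectively minimizing) ∫ g_{n+1} dμ over μ ∈ M_c. Then there exist subsets X_max and X_min of [a,b] such that supp μ_max ⊆ X_max, supp μ_min ⊆ X_min, card X_max = m+1, card X_min = m, and {a,b} ⊆ X_max. -/

import Mathlib

/-!
If an extremal measure charged too many points, one could pick `2m + 1` points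
`x₀ < ⋯ < x_{2m}` in `[a, b]` such that every other one lies in its support: the odd-indexed
ones for the maximizer (the others can be midpoints, so only interior support points count and
`a`, `b` come for free) and the even-indexed ones for the minimizer. Near a charged point `x_k`,
replace the unit mass by the normalized restriction of the measure to a small ball; by continuity
the moment matrix of these `2m + 1` probability measures, and its minors, keep the positive
determinants of the two T₊-systems. The last column of the adjugate is then orthogonal to the
moment rows of `g_0, …, g_n` and has alternating signs, so moving mass along it (out of the
balls, into point masses at the other `x_k`) preserves `c` and moves `∫ g_{n+1}` strictly in
the forbidden direction.
-/

open MeasureTheory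

/-- `(g_0, …, g_k)` is a T₊-system on `[a, b]`: the determinant
`det (g_i(x_j))` is strictly positive whenever `a ≤ x_0 < … < x_k ≤ b`. -/
def IsTPlusSystem {k : ℕ} (a b : ℝ) (g : Fin (k + 1) → ℝ → ℝ) : Prop :=
  ∀ x : Fin (k + 1) → ℝ, StrictMono x → (∀ j, x j ∈ Set.Icc a b) →
    0 < (Matrix.of fun i j => g i (x j)).det

/-- `μ` belongs to the moment set `M_c`: it is a finite nonnegative Borel
measure on `[a, b]` (i.e. vanishing outside `[a, b]`) with `∫ g_i dμ = c_i`
for all `i`. -/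
def MemMc (a b : ℝ) {n : ℕ} (g : Fin (n + 1) → ℝ → ℝ) (c : Fin (n + 1) → ℝ)
    (μ : Measure ℝ) : Prop :=
  IsFiniteMeasure μ ∧ μ (Set.Icc a b)ᶜ = 0 ∧ ∀ i, ∫ x, g i x ∂μ = c i

/-- The support of a Borel measure: the set of points all of whose open
neighborhoods have positive measure. -/
def measSupport (μ : Measure ℝ) : Set ℝ :=
  {x | ∀ U : Set ℝ, IsOpen U → x ∈ U → 0 < μ U}

open Filter Topology Set Function NNReal

section MeasureSurgery

variable {α : Type*} [MeasurableSpace α]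

theorem integrable_of_continuousOn_of_ae_mem [TopologicalSpace α] [OpensMeasurableSpace α]
    [T2Space α] {μ : Measure α} [IsFiniteMeasure μ] {K : Set α} {f : α → ℝ}
    (hK : IsCompact K) (hf : ContinuousOn f K) (hμ : ∀ᵐ x ∂μ, x ∈ K) : Integrable f μ := by
  simpa only [IntegrableOn, Measure.restrict_eq_self_of_ae_mem hμ] using
    hf.integrableOn_compact (μ := μ) hK

theorem MeasureTheory.Measure.finsetSum_restrict_le {ι : Type*} (μ : Measure α) (S : Finset ι)
    {B : ι → Set α} (hd : (S : Set ι).PairwiseDisjoint B) (hB : ∀ k, MeasurableSet (B k)) :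
    ∑ k ∈ S, μ.restrict (B k) ≤ μ := by
  refine Measure.le_iff.2 fun s hs => ?_
  simp only [Measure.coe_finsetSum, Finset.sum_apply, Measure.restrict_apply hs]
  rw [← measure_biUnion_finset (hd.mono_on fun k _ => Set.inter_subset_right)
    fun k _ => hs.inter (hB k)]
  exact measure_mono (Set.iUnion₂_subset fun k _ => Set.inter_subset_left)

theorem MeasureTheory.integral_sub_measure {E : Type*} [NormedAddCommGroup E] [NormedSpace ℝ E]
    {μ ν : Measure α} [IsFiniteMeasure ν] (hνμ : ν ≤ μ) {f : α → E} (hf : Integrable f μ) :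
    ∫ x, f x ∂(μ - ν) = ∫ x, f x ∂μ - ∫ x, f x ∂ν := by
  conv_rhs => rw [← Measure.sub_add_cancel_of_le hνμ]
  rw [integral_add_measure (hf.mono_measure Measure.sub_le) (hf.mono_measure hνμ),
    add_sub_cancel_right]

theorem MeasureTheory.integral_finsetSum_smul_measure {ι : Type*} (S : Finset ι) (c : ι → ℝ≥0)
    (ρ : ι → Measure α) {f : α → ℝ} (hf : ∀ k ∈ S, Integrable f (ρ k)) :
    ∫ x, f x ∂(∑ k ∈ S, c k • ρ k) = ∑ k ∈ S, (c k : ℝ) * ∫ x, f x ∂(ρ k) := by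
  rw [integral_finsetSum_measure fun k hk => (hf k hk).smul_measure_nnreal]
  simp only [integral_smul_nnreal_measure, NNReal.smul_def, smul_eq_mul]

theorem MeasureTheory.Measure.finsetSum_smul_le {ι : Type*} (S : Finset ι) {c : ι → ℝ≥0}
    (hc : ∀ k ∈ S, c k ≤ 1) (ρ : ι → Measure α) : ∑ k ∈ S, c k • ρ k ≤ ∑ k ∈ S, ρ k := by
  refine Finset.sum_le_sum fun k hk => Measure.le_iff'.2 fun s => ?_
  rw [Measure.smul_apply, ENNReal.smul_def, smul_eq_mul]
  exact mul_le_of_le_one_left (by positivity) (by exact_mod_cast hc k hk)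

/-- `ν` is `μ` with `t |w k| • ρ k / ρ k univ` removed where `w k < 0` and added where
`w k > 0`. -/
theorem exists_measure_integral_eq_add_sum {ι : Type*} [Fintype ι] (μ : Measure α)
    [IsFiniteMeasure μ] (ρ : ι → Measure α) [∀ k, IsFiniteMeasure (ρ k)] (S : Finset ι)
    (hρμ : ∑ k ∈ S, ρ k ≤ μ) (hρ : ∀ k ∈ S, ρ k ≠ 0) (w : ι → ℝ) (hw : ∀ k, w k < 0 → k ∈ S) :
    ∃ t > 0, ∃ ν : Measure α, IsFiniteMeasure ν ∧ ν ≪ μ + ∑ k, ρ k ∧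
      ∀ f : α → ℝ, Integrable f μ → (∀ k, Integrable f (ρ k)) →
        ∫ x, f x ∂ν = ∫ x, f x ∂μ + t * ∑ k, w k * ⨍ x, f x ∂(ρ k) := by
  have hmass : ∀ k ∈ S, 0 < (ρ k).real univ := fun k hk => by
    simpa [measureReal_def, ENNReal.toReal_pos_iff, measure_lt_top] using hρ k hk
  have hsmall : ∀ᶠ t in 𝓝[>] (0 : ℝ), ∀ k ∈ S, t * |w k| ≤ (ρ k).real univ := by
    refine Filter.eventually_all_finset _ |>.2 fun k hk => ?_
    have : Tendsto (fun t : ℝ => t * |w k|) (𝓝[>] 0) (𝓝 0) :=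
      ((continuous_mul_const |w k|).tendsto' 0 0 (zero_mul _)).mono_left nhdsWithin_le_nhds
    exact this.eventually (ge_mem_nhds (hmass k hk))
  obtain ⟨t, hts, ht⟩ := (hsmall.and self_mem_nhdsWithin).exists
  set a : ι → ℝ := fun k => t * w k / (ρ k).real univ
  set removed : Measure α := ∑ k ∈ S, (-a k).toNNReal • ρ k
  have hremoved : removed ≤ μ := by
    refine (Measure.finsetSum_smul_le S (fun k hk => ?_) ρ).trans hρμ
    rw [Real.toNNReal_le_one, ← neg_div, div_le_one (hmass k hk)]
    exact le_trans (by nlinarith [neg_le_abs (w k)]) (hts k hk)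
  have : IsFiniteMeasure (μ - removed) := isFiniteMeasure_of_le μ Measure.sub_le
  refine ⟨t, ht, (μ - removed) + ∑ k, (a k).toNNReal • ρ k, inferInstance, ?_, ?_⟩
  · refine Measure.AbsolutelyContinuous.mk fun s _ hs => ?_
    simp only [Measure.add_apply, Measure.coe_finsetSum, Finset.sum_apply, add_eq_zero,
      Finset.sum_eq_zero_iff, Finset.mem_univ, true_implies, Measure.smul_apply] at hs ⊢
    exact ⟨nonpos_iff_eq_zero.1 ((Measure.le_iff'.1 Measure.sub_le s).trans_eq hs.1),
      fun k => by simp [hs.2 k]⟩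
  · intro f hfμ hfρ
    have hremoved_eq : ∑ k ∈ S, ((-a k).toNNReal : ℝ) * ∫ x, f x ∂(ρ k) =
        ∑ k, ((-a k).toNNReal : ℝ) * ∫ x, f x ∂(ρ k) := by
      refine Finset.sum_subset (Finset.subset_univ S) fun k _ hk => ?_
      have : 0 ≤ a k := div_nonneg (mul_nonneg ht.le (not_lt.1 (mt (hw k) hk))) measureReal_nonneg
      simp [this]
    rw [integral_add_measure (hfμ.mono_measure Measure.sub_le)
        (integrable_finsetSum_measure.2 fun k _ => (hfρ k).smul_measure_nnreal),
      integral_sub_measure hremoved hfμ, integral_finsetSum_smul_measure _ _ _ fun k _ => hfρ k,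
      integral_finsetSum_smul_measure _ _ _ fun k _ => hfρ k, hremoved_eq, sub_add_eq_add_sub,
      add_sub_assoc, ← Finset.sum_sub_distrib, Finset.mul_sum]
    refine congrArg _ (Finset.sum_congr rfl fun k _ => ?_)
    rw [← sub_mul, Real.coe_toNNReal', Real.coe_toNNReal', max_zero_sub_max_neg_zero_eq_self,
      average_eq, smul_eq_mul]
    simp only [a, div_eq_mul_inv]
    ring

end MeasureSurgery

theorem tendsto_setAverage_ball {α : Type*} [PseudoMetricSpace α] [MeasurableSpace α]
    [OpensMeasurableSpace α] {μ : Measure α} [IsFiniteMeasure μ] {K : Set α} {f : α → ℝ}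
    {x : α} (hf : ContinuousWithinAt f K x) (hK : ∀ᵐ y ∂μ, y ∈ K) (hfi : Integrable f μ)
    (hμ : ∀ r > 0, μ (Metric.ball x r) ≠ 0) :
    Tendsto (fun r => ⨍ y in Metric.ball x r, f y ∂μ) (𝓝[>] 0) (𝓝 (f x)) := by
  refine Metric.tendsto_nhds.2 fun ε hε => ?_
  obtain ⟨δ, hδ, hfδ⟩ := Metric.continuousWithinAt_iff.1 hf (ε / 2) (half_pos hε)
  filter_upwards [Ioo_mem_nhdsGT hδ] with r hr
  have hmem : ⨍ y in Metric.ball x r, f y ∂μ ∈ Metric.closedBall (f x) (ε / 2) := by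
    refine (convex_closedBall _ _).set_average_mem Metric.isClosed_closedBall (hμ r hr.1)
      (measure_ne_top _ _) ?_ hfi.integrableOn
    filter_upwards [ae_restrict_mem measurableSet_ball, ae_restrict_of_ae hK] with y hy hyK
    exact (hfδ hyK (lt_trans hy hr.2)).le
  exact (Metric.mem_closedBall.1 hmem).trans_lt (half_lt_self hε)

theorem eventually_pairwise_disjoint_ball {α ι : Type*} [MetricSpace α] [Finite ι]
    {x : ι → α} (hx : Injective x) :
    ∀ᶠ r in 𝓝 (0 : ℝ), Pairwise (Disjoint on (fun k => Metric.ball (x k) r)) := by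
  have hsum : Tendsto (fun r : ℝ => r + r) (𝓝 0) (𝓝 0) := by
    simpa using tendsto_id.add (tendsto_id (x := 𝓝 (0 : ℝ)))
  refine eventually_all.2 fun k => eventually_all.2 fun l => ?_
  by_cases hkl : k = l
  · exact Eventually.of_forall fun _ h => absurd hkl h
  · filter_upwards [hsum.eventually (ge_mem_nhds (dist_pos.2 (hx.ne hkl)))] with r hr _
    exact Metric.ball_disjoint_ball hr

theorem Matrix.adjugate_apply_last {R : Type*} [CommRing R] {n : ℕ}
    (A : Matrix (Fin (n + 2)) (Fin (n + 2)) R) (k : Fin (n + 2)) :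
    A.adjugate k (Fin.last _) =
      (-1) ^ (n + 1 + (k : ℕ)) * (A.submatrix Fin.castSucc k.succAbove).det := by
  rw [adjugate_fin_succ_eq_det_submatrix, Fin.succAbove_last, Fin.val_last]

theorem Matrix.sum_mul_adjugate_apply {R ι : Type*} [CommRing R] [Fintype ι] [DecidableEq ι]
    (A : Matrix ι ι R) (i j : ι) :
    ∑ k, A i k * A.adjugate k j = if i = j then A.det else 0 := by
  rw [← mul_apply, mul_adjugate, smul_apply, one_apply, smul_eq_mul, mul_boole]

theorem Filter.Tendsto.eventually_det_pos_and_minors_pos {β : Type*} {l : Filter β} {n : ℕ}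
    {A : β → Matrix (Fin (n + 2)) (Fin (n + 2)) ℝ} {A₀ : Matrix (Fin (n + 2)) (Fin (n + 2)) ℝ}
    (hA : Tendsto A l (𝓝 A₀)) (h₀ : 0 < A₀.det)
    (h₀' : ∀ k : Fin (n + 2), 0 < (A₀.submatrix Fin.castSucc k.succAbove).det) :
    ∀ᶠ b in l, 0 < (A b).det ∧
      ∀ k : Fin (n + 2), 0 < ((A b).submatrix Fin.castSucc k.succAbove).det := by
  refine ((continuous_id.matrix_det.tendsto _).comp hA |>.eventually (lt_mem_nhds h₀)).and
    (eventually_all.2 fun k => ?_)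
  exact ((continuous_id.matrix_submatrix _ _).matrix_det.tendsto _).comp hA
    |>.eventually (lt_mem_nhds (h₀' k))

section RestrictBallOrDirac

variable {α ι : Type*} [PseudoMetricSpace α] [MeasurableSpace α] [DecidableEq ι]

noncomputable def restrictBallOrDirac (μ : Measure α) (S : Finset ι) (x : ι → α) (r : ℝ) (k : ι) :
    Measure α :=
  if k ∈ S then μ.restrict (Metric.ball (x k) r) else Measure.dirac (x k)

variable {μ : Measure α} {S : Finset ι} {x : ι → α} {r : ℝ}

instance [IsFiniteMeasure μ] (k : ι) : IsFiniteMeasure (restrictBallOrDirac μ S x r k) := by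
  unfold restrictBallOrDirac
  split_ifs <;> infer_instance

theorem restrictBallOrDirac_apply_compl {K : Set α} (hK : MeasurableSet K) (hμ : μ Kᶜ = 0)
    (hx : ∀ k, x k ∈ K) (k : ι) : restrictBallOrDirac μ S x r k Kᶜ = 0 := by
  unfold restrictBallOrDirac
  split_ifs
  · exact nonpos_iff_eq_zero.1 ((Measure.restrict_apply_le _ _).trans_eq hμ)
  · simp [Measure.dirac_apply' _ hK.compl, hx k]

theorem sum_restrictBallOrDirac_le [OpensMeasurableSpace α]
    (hd : Pairwise (Disjoint on fun k => Metric.ball (x k) r)) :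
    ∑ k ∈ S, restrictBallOrDirac μ S x r k ≤ μ := by
  refine (Finset.sum_congr rfl fun k hk => ?_).trans_le
    (Measure.finsetSum_restrict_le μ S (hd.set_pairwise _) fun _ => measurableSet_ball)
  simp [restrictBallOrDirac, hk]

theorem tendsto_average_restrictBallOrDirac [OpensMeasurableSpace α] [MeasurableSingletonClass α]
    [IsFiniteMeasure μ] {K : Set α} {f : α → ℝ} {k : ι} (hf : ContinuousWithinAt f K (x k))
    (hK : ∀ᵐ y ∂μ, y ∈ K) (hfi : Integrable f μ)
    (hμ : k ∈ S → ∀ r > 0, μ (Metric.ball (x k) r) ≠ 0) :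
    Tendsto (fun r => ⨍ y, f y ∂(restrictBallOrDirac μ S x r k)) (𝓝[>] 0) (𝓝 (f (x k))) := by
  by_cases hk : k ∈ S
  · simpa only [restrictBallOrDirac, hk, if_true] using
      tendsto_setAverage_ball hf hK hfi (hμ hk)
  · simp [restrictBallOrDirac, hk, average_eq_integral, integral_dirac]

end RestrictBallOrDirac

theorem IsTPlusSystem.submatrix_castSucc_det_pos {a b : ℝ} {n : ℕ} {g : Fin (n + 1) → ℝ → ℝ}
    (gtop : ℝ → ℝ) (hT : IsTPlusSystem a b g) {x : Fin (n + 2) → ℝ} (hx : StrictMono x)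
    (hxI : ∀ k, x k ∈ Icc a b) (k : Fin (n + 2)) :
    0 < ((Matrix.of fun i j => (Fin.snoc g gtop : Fin (n + 2) → ℝ → ℝ) i (x j)).submatrix
      Fin.castSucc k.succAbove).det := by
  simpa [Matrix.submatrix, Matrix.of_apply] using
    hT (x ∘ k.succAbove) (hx.comp (Fin.strictMono_succAbove k)) fun j => hxI _

theorem odd_of_neg_one_pow_mul_adjugate_last_neg {n : ℕ} {A : Matrix (Fin (n + 2)) (Fin (n + 2)) ℝ}
    (hA : ∀ k : Fin (n + 2), 0 < (A.submatrix Fin.castSucc k.succAbove).det) (p : ℕ)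
    {k : Fin (n + 2)}
    (hk : (-1) ^ p * A.adjugate k (Fin.last _) < 0) : Odd (p + n + 1 + k) := by
  by_contra hodd
  simp only [Matrix.adjugate_apply_last, ← mul_assoc, ← pow_add, ← add_assoc,
    (Nat.not_odd_iff_even.1 hodd).neg_one_pow, one_mul] at hk
  exact (hA k).not_gt hk

/-- The signs of the last column of the adjugate alternate, so this column tells which pieces
`ρ k` to remove and which to add in order to move only the top moment. -/
theorem exists_measure_integral_eq_add_det {α : Type*} [MeasurableSpace α] {n : ℕ}
    (μ : Measure α) [IsFiniteMeasure μ] (ρ : Fin (n + 2) → Measure α) [∀ k, IsFiniteMeasure (ρ k)]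
    (S : Finset (Fin (n + 2))) (hρμ : ∑ k ∈ S, ρ k ≤ μ) (hρ : ∀ k ∈ S, ρ k ≠ 0)
    {G : Fin (n + 2) → α → ℝ} (hGμ : ∀ i, Integrable (G i) μ)
    (hGρ : ∀ i k, Integrable (G i) (ρ k)) (p : ℕ)
    (hS : ∀ k : Fin (n + 2), Odd (p + n + 1 + k) → k ∈ S)
    (hminor : ∀ k : Fin (n + 2), 0 < ((Matrix.of fun i k => ⨍ y, G i y ∂(ρ k)).submatrix
      Fin.castSucc k.succAbove).det) :
    ∃ t > 0, ∃ ν : Measure α, IsFiniteMeasure ν ∧ ν ≪ μ + ∑ k, ρ k ∧ ∀ i, ∫ y, G i y ∂ν =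
      ∫ y, G i y ∂μ + t * (-1) ^ p *
        if i = Fin.last _ then (Matrix.of fun i k => ⨍ y, G i y ∂(ρ k)).det else 0 := by
  set A : Matrix (Fin (n + 2)) (Fin (n + 2)) ℝ := Matrix.of fun i k => ⨍ y, G i y ∂(ρ k)
  obtain ⟨t, ht, ν, hνfin, hνac, hνint⟩ := exists_measure_integral_eq_add_sum μ ρ S hρμ hρ
    (fun k => (-1) ^ p * A.adjugate k (Fin.last _))
    fun k hk => hS k (odd_of_neg_one_pow_mul_adjugate_last_neg hminor p hk)
  refine ⟨t, ht, ν, hνfin, hνac, fun i => ?_⟩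
  rw [hνint (G i) (hGμ i) fun k => hGρ i k, ← Matrix.sum_mul_adjugate_apply, Finset.mul_sum,
    Finset.mul_sum]
  refine congrArg _ (Finset.sum_congr rfl fun k _ => ?_)
  simp only [A, Matrix.of_apply]
  ring

theorem exists_memMc_neg_one_pow_mul_integral_lt {a b : ℝ} {n : ℕ} {g : Fin (n + 1) → ℝ → ℝ}
    {gtop : ℝ → ℝ} (hg : ∀ i, ContinuousOn (g i) (Icc a b))
    (hgtop : ContinuousOn gtop (Icc a b)) (hT : IsTPlusSystem a b g)
    (hT' : IsTPlusSystem a b (Fin.snoc g gtop)) {c : Fin (n + 1) → ℝ} {μ : Measure ℝ}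
    (hμ : MemMc a b g c μ) {x : Fin (n + 2) → ℝ} (hx : StrictMono x) (hxI : ∀ k, x k ∈ Icc a b)
    (p : ℕ) (hsupp : ∀ k : Fin (n + 2), Odd (p + n + 1 + k) → x k ∈ measSupport μ) :
    ∃ ν, MemMc a b g c ν ∧ (-1) ^ p * ∫ y, gtop y ∂μ < (-1) ^ p * ∫ y, gtop y ∂ν := by
  obtain ⟨hfin, hnull, hmom⟩ := hμ
  set G : Fin (n + 2) → ℝ → ℝ := Fin.snoc g gtop
  have hG : ∀ i, ContinuousOn (G i) (Icc a b) :=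
    Fin.lastCases (by simpa [G] using hgtop) fun i => by simpa [G] using hg i
  have hint : ∀ {ν : Measure ℝ} [IsFiniteMeasure ν], ν (Icc a b)ᶜ = 0 → ∀ i,
      Integrable (G i) ν := fun hν i =>
    integrable_of_continuousOn_of_ae_mem isCompact_Icc (hG i) (ae_iff.2 hν)
  set S := Finset.univ.filter fun k : Fin (n + 2) => Odd (p + n + 1 + k)
  have hball : ∀ k ∈ S, ∀ r > 0, μ (Metric.ball (x k) r) ≠ 0 := fun k hk r hr =>
    (hsupp k (Finset.mem_filter.1 hk).2 _ Metric.isOpen_ball (Metric.mem_ball_self hr)).ne'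
  set ρ := restrictBallOrDirac μ S x
  have hρnull : ∀ r k, ρ r k (Icc a b)ᶜ = 0 := fun r =>
    restrictBallOrDirac_apply_compl measurableSet_Icc hnull hxI
  have hA : Tendsto (fun r => Matrix.of fun i k => ⨍ y, G i y ∂(ρ r k)) (𝓝[>] 0)
      (𝓝 (Matrix.of fun i k => G i (x k))) :=
    tendsto_pi_nhds.2 fun i => tendsto_pi_nhds.2 fun k =>
      tendsto_average_restrictBallOrDirac (hG i _ (hxI k)) (ae_iff.2 hnull) (hint hnull i)
        (hball k)
  obtain ⟨r, ⟨hdet, hminor⟩, hdisj, hr⟩ := ((hA.eventually_det_pos_and_minors_pos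
    (hT' x hx hxI) (hT.submatrix_castSucc_det_pos gtop hx hxI)).and
    ((eventually_nhdsWithin_of_eventually_nhds
      (eventually_pairwise_disjoint_ball hx.injective)).and eventually_mem_nhdsWithin)).exists
  obtain ⟨t, ht, ν, hνfin, hνac, hmoment⟩ := exists_measure_integral_eq_add_det μ (ρ r) S
    (sum_restrictBallOrDirac_le hdisj)
    (fun k hk => by simpa [ρ, restrictBallOrDirac, hk] using hball k hk r hr) (hint hnull)
    (fun i k => hint (hρnull r k) i) p (fun k hk => by simpa [S] using hk) hminor
  refine ⟨ν, ⟨hνfin, hνac (by simp [hnull, hρnull]), fun i => ?_⟩, ?_⟩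
  · simpa [G, (Fin.castSucc_lt_last i).ne, hmom i] using hmoment i.castSucc
  · have hsq : (-1 : ℝ) ^ p * (-1) ^ p = 1 := by rw [← pow_add, Even.neg_one_pow ⟨p, rfl⟩]
    have h := hmoment (Fin.last _)
    simp only [G, Fin.snoc_last, if_true] at h
    rw [h]
    linear_combination mul_pos ht hdet - t * (Matrix.of fun i k => ⨍ y, G i y ∂(ρ r k)).det * hsq

theorem Set.finite_and_ncard_lt_of_not_exists_strictMono {α : Type*} [LinearOrder α] {T : Set α}
    {k : ℕ} (h : ¬ ∃ e : Fin k → α, StrictMono e ∧ ∀ j, e j ∈ T) : T.Finite ∧ T.ncard < k := by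
  by_contra hT
  obtain ⟨F, hFT, hF⟩ : ∃ F : Finset α, ↑F ⊆ T ∧ F.card = k := by
    by_cases hfin : T.Finite
    · obtain ⟨F, hF, hFk⟩ := Finset.exists_subset_card_eq (s := hfin.toFinset) (n := k)
        (by rw [← ncard_eq_toFinset_card _ hfin]; exact not_lt.1 fun h => hT ⟨hfin, h⟩)
      exact ⟨F, fun y hy => hfin.mem_toFinset.1 (hF hy), hFk⟩
    · exact Set.Infinite.exists_subset_card_eq hfin k
  exact h ⟨fun j => F.orderEmbOfFin hF j, (F.orderEmbOfFin hF).strictMono,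
    fun j => hFT (F.orderEmbOfFin_mem hF j)⟩

theorem Set.Infinite.exists_finset_superset_card_eq {α : Type*} {s t : Set α} (ht : t.Infinite)
    (hst : s ⊆ t) (hs : s.Finite) {k : ℕ} (hsk : s.ncard ≤ k) :
    ∃ X : Finset α, s ⊆ X ∧ ↑X ⊆ t ∧ X.card = k := by
  obtain ⟨u, hu, hufin, hucard⟩ := (ht.sdiff hs).exists_subset_ncard_eq (k - s.ncard)
  refine ⟨(hs.union hufin).toFinset, by simp,
    by simpa using union_subset hst (hu.trans sdiff_subset), ?_⟩
  rw [← ncard_eq_toFinset_card _ (hs.union hufin),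
    ncard_union_eq (disjoint_of_subset_right hu disjoint_sdiff_right) hs hufin, hucard]
  omega

section Interleave

variable {β : Type*} {m : ℕ}

def interleave (z : Fin (m + 1) → β) (s : Fin m → β) (k : Fin (2 * m + 1)) : β :=
  if h : (k : ℕ) % 2 = 0 then z ⟨k / 2, by omega⟩ else s ⟨k / 2, by omega⟩

variable {z : Fin (m + 1) → β} {s : Fin m → β}

theorem interleave_mem_range_left {k : Fin (2 * m + 1)} (hk : Even (k : ℕ)) :
    interleave z s k ∈ range z := by
  simp [interleave, Nat.even_iff.1 hk]

theorem interleave_mem_range_right {k : Fin (2 * m + 1)} (hk : Odd (k : ℕ)) :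
    interleave z s k ∈ range s := by
  simp [interleave, Nat.odd_iff.1 hk]

theorem interleave_mem {K : Set β} (hz : ∀ j, z j ∈ K) (hs : ∀ j, s j ∈ K)
    (k : Fin (2 * m + 1)) : interleave z s k ∈ K := by
  unfold interleave
  split_ifs
  exacts [hz _, hs _]

theorem strictMono_interleave [Preorder β] (hzs : ∀ j, z j.castSucc < s j)
    (hsz : ∀ j, s j < z j.succ) : StrictMono (interleave z s) := by
  refine Fin.strictMono_iff_lt_succ.2 fun i => ?_
  have hi := i.isLt
  rcases Nat.even_or_odd' (i : ℕ) with ⟨j, hj | hj⟩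
  · have h₁ : interleave z s i.castSucc = z ⟨j, by omega⟩ := by simp [interleave, hj]
    have h₂ : interleave z s i.succ = s ⟨j, by omega⟩ := by
      simp [interleave, hj, Nat.add_mod, Nat.add_div]
    rw [h₁, h₂]
    exact hzs ⟨j, by omega⟩
  · have h₁ : interleave z s i.castSucc = s ⟨j, by omega⟩ := by
      simp [interleave, hj, Nat.add_mod, Nat.add_div]
    have h₂ : interleave z s i.succ = z ⟨j + 1, by omega⟩ := by
      simp [interleave, hj, Nat.add_mod, Nat.add_div]
    rw [h₁, h₂]
    exact hsz ⟨j, by omega⟩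

end Interleave

theorem measSupport_subset_of_measure_compl_eq_zero {μ : Measure ℝ} {K : Set ℝ} (hK : IsClosed K)
    (h : μ Kᶜ = 0) : measSupport μ ⊆ K := fun _ hx =>
  by_contra fun hxK => (hx Kᶜ hK.isOpen_compl hxK).ne' h

section Extremal

variable {a b : ℝ} {m n : ℕ} {g : Fin (n + 1) → ℝ → ℝ} {gtop : ℝ → ℝ} {c : Fin (n + 1) → ℝ}
  {μ : Measure ℝ}

theorem finite_measSupport_and_ncard_le_of_minimizer (hnm : n + 1 = 2 * m)
    (hg : ∀ i, ContinuousOn (g i) (Icc a b)) (hgtop : ContinuousOn gtop (Icc a b))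
    (hT : IsTPlusSystem a b g) (hT' : IsTPlusSystem a b (Fin.snoc g gtop))
    (hμ : MemMc a b g c μ) (hmin : ∀ ν, MemMc a b g c ν → ∫ y, gtop y ∂μ ≤ ∫ y, gtop y ∂ν) :
    (measSupport μ).Finite ∧ (measSupport μ).ncard ≤ m := by
  refine (Set.finite_and_ncard_lt_of_not_exists_strictMono ?_).imp_right Nat.lt_succ_iff.1
  rintro ⟨e, he, heμ⟩
  have heI : ∀ j, e j ∈ Icc a b := fun j =>
    measSupport_subset_of_measure_compl_eq_zero isClosed_Icc hμ.2.1 (heμ j)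
  have hcast : n + 2 = 2 * m + 1 := by omega
  set x := interleave e (fun j => (e j.castSucc + e j.succ) / 2) ∘ Fin.cast hcast
  have hlt : ∀ j : Fin m, e j.castSucc < e j.succ := fun _ => he Fin.castSucc_lt_succ
  have hx : StrictMono x := (strictMono_interleave (fun j => by linarith [hlt j])
    fun j => by linarith [hlt j]).comp (Fin.castOrderIso hcast).strictMono
  have hxI : ∀ k, x k ∈ Icc a b := fun k => interleave_mem heI (fun j =>
    ⟨by linarith [(heI j.castSucc).1, (heI j.succ).1],
      by linarith [(heI j.castSucc).2, (heI j.succ).2]⟩) _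
  obtain ⟨ν, hν, hgain⟩ := exists_memMc_neg_one_pow_mul_integral_lt hg hgtop hT hT' hμ hx hxI 1
    fun k hk => by
      obtain ⟨j, hj⟩ := interleave_mem_range_left (z := e)
        (s := fun j => (e j.castSucc + e j.succ) / 2) (k := Fin.cast hcast k)
        (Nat.even_iff.2 (by have := Nat.odd_iff.1 hk; simp only [Fin.val_cast]; omega))
      simpa [x, ← hj] using heμ j
  linarith [hmin ν hν]

theorem finite_insert_measSupport_and_ncard_le_of_maximizer (hab : a ≤ b) (hnm : n + 1 = 2 * m)
    (hg : ∀ i, ContinuousOn (g i) (Icc a b)) (hgtop : ContinuousOn gtop (Icc a b))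
    (hT : IsTPlusSystem a b g) (hT' : IsTPlusSystem a b (Fin.snoc g gtop))
    (hμ : MemMc a b g c μ) (hmax : ∀ ν, MemMc a b g c ν → ∫ y, gtop y ∂ν ≤ ∫ y, gtop y ∂μ) :
    (insert a (insert b (measSupport μ))).Finite ∧
      (insert a (insert b (measSupport μ))).ncard ≤ m + 1 := by
  refine (Set.finite_and_ncard_lt_of_not_exists_strictMono ?_).imp_right Nat.lt_succ_iff.1
  rintro ⟨e, he, heT⟩
  have hsupp := measSupport_subset_of_measure_compl_eq_zero isClosed_Icc hμ.2.1
  have heI : ∀ j, e j ∈ Icc a b := fun j => by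
    rcases heT j with h | h | h
    exacts [by simp [h, hab], by simp [h, hab], hsupp h]
  have hlt : ∀ j : Fin (m + 1), e j.castSucc < e j.succ := fun _ => he Fin.castSucc_lt_succ
  have heμ : ∀ j : Fin m, e j.castSucc.succ ∈ measSupport μ := fun j => by
    have ha : a < e j.castSucc.succ := (heI 0).1.trans_lt (he (by simp [Fin.lt_def]))
    have hb : e j.castSucc.succ < b :=
      (he (by simp [Fin.lt_def] : j.castSucc.succ < Fin.last _)).trans_le (heI _).2
    rcases heT j.castSucc.succ with h | h | h
    exacts [absurd h ha.ne', absurd h hb.ne, h]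
  have hcast : n + 2 = 2 * m + 1 := by omega
  set x := interleave (fun j => (e j.castSucc + e j.succ) / 2) (fun j => e j.castSucc.succ) ∘
    Fin.cast hcast
  have hx : StrictMono x := (strictMono_interleave
    (fun j => by linarith [hlt j.castSucc])
    fun j => by rw [Fin.succ_castSucc]; linarith [hlt j.succ]).comp
    (Fin.castOrderIso hcast).strictMono
  have hxI : ∀ k, x k ∈ Icc a b := fun k => interleave_mem (K := Icc a b) (fun j =>
    ⟨by linarith [(heI j.castSucc).1, (heI j.succ).1],
      by linarith [(heI j.castSucc).2, (heI j.succ).2]⟩) (fun j => heI _) _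
  obtain ⟨ν, hν, hgain⟩ := exists_memMc_neg_one_pow_mul_integral_lt hg hgtop hT hT' hμ hx hxI 0
    fun k hk => by
      obtain ⟨j, hj⟩ := interleave_mem_range_right (z := fun j => (e j.castSucc + e j.succ) / 2)
        (s := fun j => e j.castSucc.succ) (k := Fin.cast hcast k)
        (Nat.odd_iff.2 (by have := Nat.odd_iff.1 hk; simp only [Fin.val_cast]; omega))
      simp only [x, comp_apply, ← hj]
      exact heμ j
  simp only [pow_zero, one_mul] at hgain
  linarith [hmax ν hν]

end Extremal

/-- The odd case `n = 2m - 1` (with `m ≥ 1`) of the localization of the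
extremal measures: the supports of the maximizer and the minimizer of
`∫ g_{n+1} dμ` over `M_c` are contained in sets `X_max ⊇ {a, b}` of
cardinality `m + 1` and `X_min` of cardinality `m`, respectively. -/
theorem tplus_extremal_support_odd (a b : ℝ) (hab : a < b) (m : ℕ) (hm : 1 ≤ m)
    (g : Fin (2 * m - 1 + 1) → ℝ → ℝ) (gtop : ℝ → ℝ)
    (hg : ∀ i, ContinuousOn (g i) (Set.Icc a b))
    (hgtop : ContinuousOn gtop (Set.Icc a b))
    (hT : IsTPlusSystem a b g)
    (hT' : IsTPlusSystem a b (Fin.snoc g gtop))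
    (c : Fin (2 * m - 1 + 1) → ℝ)
    (μmax μmin : Measure ℝ)
    (hμmax : MemMc a b g c μmax) (hμmin : MemMc a b g c μmin)
    (hmax : ∀ μ : Measure ℝ, MemMc a b g c μ → ∫ x, gtop x ∂μ ≤ ∫ x, gtop x ∂μmax)
    (hmin : ∀ μ : Measure ℝ, MemMc a b g c μ → ∫ x, gtop x ∂μmin ≤ ∫ x, gtop x ∂μ) :
    ∃ Xmax Xmin : Finset ℝ,
      ↑Xmax ⊆ Set.Icc a b ∧ ↑Xmin ⊆ Set.Icc a b ∧
      measSupport μmax ⊆ ↑Xmax ∧ measSupport μmin ⊆ ↑Xmin ∧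
      Xmax.card = m + 1 ∧ Xmin.card = m ∧ a ∈ Xmax ∧ b ∈ Xmax := by
  have hnm : 2 * m - 1 + 1 = 2 * m := by omega
  have hIcc : (Icc a b).Infinite := Icc_infinite hab
  obtain ⟨hfinmax, hcardmax⟩ :=
    finite_insert_measSupport_and_ncard_le_of_maximizer hab.le hnm hg hgtop hT hT' hμmax hmax
  obtain ⟨hfinmin, hcardmin⟩ :=
    finite_measSupport_and_ncard_le_of_minimizer hnm hg hgtop hT hT' hμmin hmin
  obtain ⟨Xmax, hTXmax, hXmax, hXmaxcard⟩ := hIcc.exists_finset_superset_card_eq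
    (insert_subset (left_mem_Icc.2 hab.le) (insert_subset (right_mem_Icc.2 hab.le)
      (measSupport_subset_of_measure_compl_eq_zero isClosed_Icc hμmax.2.1))) hfinmax hcardmax
  obtain ⟨Xmin, hTXmin, hXmin, hXmincard⟩ := hIcc.exists_finset_superset_card_eq
    (measSupport_subset_of_measure_compl_eq_zero isClosed_Icc hμmin.2.1) hfinmin hcardmin
  exact ⟨Xmax, Xmin, hXmax, hXmin,
    (subset_insert _ _).trans ((subset_insert _ _).trans hTXmax), hTXmin, hXmaxcard, hXmincard,
    hTXmax (mem_insert _ _), hTXmax (mem_insert_of_mem _ (mem_insert _ _))⟩
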